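/- Under the stated hypotheses, the piecewise differences of the local averages satisfy τ · Σ_{k=1}^m ‖(f_k − f_{k−1})/τ‖² ≤ 4 ∫_0^T ‖g(s)‖² ds. -/

import Mathlib

/-!
Extend `g` by zero outside `(0, T]` and `f` by `F t = f 0 + ∫ s in 0..t, g s`. Then `F = f 0` on
`(-∞, 0]`, so every `f_k`, `f_0` included, is the average of `F` over `[t_k - τ, t_k]`. Two
consecutive averages differ by `(1/τ) ∫_{t_{k-1}}^{t_k} (F s - F (s - τ)) ds`, and
`‖F s - F (s - τ)‖ ≤ ∫_{t_{k-2}}^{t_k} ‖g‖`; Cauchy–Schwarz on a window of length `2τ` gives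
`τ ‖(f_k - f_{k-1})/τ‖² ≤ 2 ∫_{t_{k-2}}^{t_k} ‖g‖²`. Every cell `[t_{j-1}, t_j]` lies in at most two
such windows, hence the factor `4`.
-/

open MeasureTheory Set

theorem sq_intervalIntegral_le {h : ℝ → ℝ} {a b : ℝ} (hab : a ≤ b)
    (hm : AEStronglyMeasurable h (volume.restrict (Ioc a b)))
    (h2 : IntegrableOn (fun x => h x ^ 2) (Ioc a b)) :
    (∫ x in a..b, h x) ^ 2 ≤ (b - a) * ∫ x in a..b, h x ^ 2 := by
  rcases hab.eq_or_lt with rfl | hlt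
  · simp
  have hfin : volume (Ioc a b) ≠ ⊤ := measure_Ioc_lt_top.ne
  have := isFiniteMeasure_restrict.2 hfin
  have hi : IntegrableOn h (Ioc a b) :=
    ((memLp_two_iff_integrable_sq hm).2 h2).integrable one_le_two
  have hJensen := (even_two.convexOn_pow (𝕜 := ℝ)).map_set_average_le
    (continuous_pow 2).continuousOn isClosed_univ (by simp [hlt]) hfin (by simp) hi h2
  simp only [setAverage_eq, Real.volume_real_Ioc_of_le hab, smul_eq_mul, ← div_eq_inv_mul,
    div_pow] at hJensen
  rw [div_le_div_iff₀ (by nlinarith) (sub_pos.2 hlt)] at hJensen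
  rw [intervalIntegral.integral_of_le hab, intervalIntegral.integral_of_le hab]
  nlinarith [sub_pos.2 hlt]

theorem intervalIntegral_le_integral_of_nonneg {h : ℝ → ℝ} (h0 : 0 ≤ h) (hh : Integrable h)
    (a b : ℝ) : ∫ x in a..b, h x ≤ ∫ x, h x := by
  have hint : 0 ≤ ∫ x, h x := integral_nonneg h0
  rcases le_total a b with hab | hba
  · rw [intervalIntegral.integral_of_le hab]
    exact setIntegral_le_integral hh (.of_forall h0)
  · rw [intervalIntegral.integral_symm]
    linarith [intervalIntegral.integral_nonneg (μ := volume) hba fun x _ => h0 x]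

theorem sum_intervalIntegral_adjacent_le_integral {h : ℝ → ℝ} (h0 : 0 ≤ h) (hh : Integrable h)
    (τ c : ℝ) (m : ℕ) :
    ∑ i ∈ Finset.range m, ∫ x in i * τ + c..(i + 1) * τ + c, h x ≤ ∫ x, h x := by
  have htel := intervalIntegral.sum_integral_adjacent_intervals (a := fun i : ℕ => i * τ + c)
    (f := h) (μ := volume) (n := m) fun _ _ => hh.intervalIntegrable
  push_cast at htel
  rw [htel]
  exact intervalIntegral_le_integral_of_nonneg h0 hh _ _

theorem sum_intervalIntegral_sub_add_le {h : ℝ → ℝ} (h0 : 0 ≤ h) (hh : Integrable h) (τ : ℝ)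
    (m : ℕ) : ∑ i ∈ Finset.range m, ∫ x in i * τ - τ..i * τ + τ, h x ≤ 2 * ∫ x, h x := by
  have hsplit : ∀ i : ℕ, ∫ x in i * τ - τ..i * τ + τ, h x
      = (∫ x in i * τ + -τ..(i + 1) * τ + -τ, h x) + ∫ x in i * τ + 0..(i + 1) * τ + 0, h x := by
    intro i
    convert (intervalIntegral.integral_add_adjacent_intervals (b := i * τ) hh.intervalIntegrable
      hh.intervalIntegrable).symm using 3 <;> ring
  simp only [hsplit, Finset.sum_add_distrib]
  linarith [sum_intervalIntegral_adjacent_le_integral h0 hh τ (-τ) m,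
    sum_intervalIntegral_adjacent_le_integral h0 hh τ 0 m]

theorem integrableOn_of_integrableOn_sq_norm {α E : Type*} [MeasurableSpace α]
    [NormedAddCommGroup E] {μ : Measure α} {s : Set α} {g : α → E} (hs : μ s ≠ ⊤)
    (hg : AEStronglyMeasurable g (μ.restrict s))
    (hg2 : IntegrableOn (fun x => ‖g x‖ ^ 2) s μ) : IntegrableOn g s μ :=
  have := isFiniteMeasure_restrict.2 hs
  ((memLp_two_iff_integrable_sq_norm hg).2 hg2).integrable one_le_two

theorem sq_norm_indicator {α E : Type*} [NormedAddCommGroup E] (s : Set α) (g : α → E) :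
    (fun x => ‖s.indicator g x‖ ^ 2) = s.indicator fun x => ‖g x‖ ^ 2 := by
  ext x
  by_cases hx : x ∈ s <;> simp [hx]

section
variable {E : Type*} [NormedAddCommGroup E] [NormedSpace ℝ E]

theorem continuous_of_sub_eq_intervalIntegral {F G : ℝ → E} (hG : Integrable G)
    (hFG : ∀ s t, F t - F s = ∫ r in s..t, G r) : Continuous F := by
  have hF : F = fun t => F 0 + ∫ r in 0..t, G r := funext fun t => by rw [← hFG]; abel
  rw [hF]
  exact continuous_const.add
    (intervalIntegral.continuous_primitive (fun _ _ => hG.intervalIntegrable) 0)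

theorem norm_intervalIntegral_sub_shift_le {F G : ℝ → E} (hG : Integrable G)
    (hFG : ∀ s t, F t - F s = ∫ r in s..t, G r) (a : ℝ) {τ : ℝ} (hτ : 0 ≤ τ) :
    ‖(∫ s in a..a + τ, F s) - ∫ s in a - τ..a, F s‖ ≤ τ * ∫ s in a - τ..a + τ, ‖G s‖ := by
  have hF := continuous_of_sub_eq_intervalIntegral hG hFG
  have hshift : (∫ s in a..a + τ, F s) - ∫ s in a - τ..a, F s
      = ∫ s in a..a + τ, (F s - F (s - τ)) := by
    have hF_shift : IntervalIntegrable (fun s => F (s - τ)) volume a (a + τ) :=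
      (hF.comp (continuous_sub_right τ)).intervalIntegrable _ _
    rw [intervalIntegral.integral_sub (hF.intervalIntegrable _ _) hF_shift,
      intervalIntegral.integral_comp_sub_right F τ, add_sub_cancel_right]
  have hpointwise : ∀ s ∈ uIoc a (a + τ), ‖F s - F (s - τ)‖ ≤ ∫ r in a - τ..a + τ, ‖G r‖ := by
    intro s hs
    rw [uIoc_of_le (by linarith)] at hs
    rw [hFG]
    calc ‖∫ r in s - τ..s, G r‖ ≤ ∫ r in s - τ..s, ‖G r‖ :=
          intervalIntegral.norm_integral_le_integral_norm (by linarith)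
      _ ≤ ∫ r in a - τ..a + τ, ‖G r‖ :=
          intervalIntegral.integral_mono_interval (by linarith [hs.1]) (by linarith) hs.2
            (.of_forall fun _ => norm_nonneg _) hG.norm.intervalIntegrable
  have := intervalIntegral.norm_integral_le_of_norm_le_const hpointwise
  rwa [add_sub_cancel_left, abs_of_nonneg hτ, mul_comm, ← hshift] at this

theorem mul_norm_sq_difference_quotient_le {F G : ℝ → E} (hG : Integrable G)
    (hG2 : Integrable fun s => ‖G s‖ ^ 2) (hFG : ∀ s t, F t - F s = ∫ r in s..t, G r)
    (a : ℝ) {τ : ℝ} (hτ : 0 < τ) :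
    τ * ‖(1 / τ) • ((1 / τ) • (∫ s in a..a + τ, F s) - (1 / τ) • ∫ s in a - τ..a, F s)‖ ^ 2
      ≤ 2 * ∫ s in a - τ..a + τ, ‖G s‖ ^ 2 := by
  have hΔ :=
    pow_le_pow_left₀ (norm_nonneg _) (norm_intervalIntegral_sub_shift_le hG hFG a hτ.le) 2
  have hCS := sq_intervalIntegral_le (by linarith : a - τ ≤ a + τ)
    hG.norm.aestronglyMeasurable.restrict hG2.integrableOn
  rw [← smul_sub, smul_smul, norm_smul, Real.norm_of_nonneg (by positivity)]
  calc τ * (1 / τ * (1 / τ) * ‖(∫ s in a..a + τ, F s) - ∫ s in a - τ..a, F s‖) ^ 2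
      = ‖(∫ s in a..a + τ, F s) - ∫ s in a - τ..a, F s‖ ^ 2 / τ ^ 3 := by field_simp
    _ ≤ 2 * ∫ s in a - τ..a + τ, ‖G s‖ ^ 2 := by
      rw [div_le_iff₀ (by positivity)]
      nlinarith [mul_le_mul_of_nonneg_left hCS (sq_nonneg τ)]

theorem intervalIntegral_indicator_Ioc_of_mem_Icc {g : ℝ → E} {T t : ℝ} (ht : t ∈ Icc 0 T) :
    ∫ s in 0..t, (Ioc 0 T).indicator g s = ∫ s in 0..t, g s := by
  refine intervalIntegral.integral_congr_ae (.of_forall fun s hs => ?_)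
  rw [uIoc_of_le ht.1] at hs
  exact indicator_of_mem (Ioc_subset_Ioc_right ht.2 hs) g

theorem intervalIntegral_indicator_Ioc_of_nonpos {g : ℝ → E} {T t : ℝ} (ht : t ≤ 0) :
    ∫ s in 0..t, (Ioc 0 T).indicator g s = 0 := by
  rw [← intervalIntegral.integral_zero (a := 0) (b := t) (μ := volume) (E := E)]
  refine intervalIntegral.integral_congr fun s hs => ?_
  rw [uIcc_of_ge ht] at hs
  exact indicator_of_notMem (fun hs' => absurd hs.2 (not_le.2 hs'.1)) g

variable [CompleteSpace E]

theorem eq_smul_intervalIntegral_extension {f g : ℝ → E} {fk : ℕ → E} {T τ : ℝ} {m : ℕ}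
    (hτ : 0 < τ) (hmτ : m * τ = T) (hf : ∀ t ∈ Icc 0 T, f t = f 0 + ∫ s in 0..t, g s)
    (hfk0 : fk 0 = f 0)
    (hfk : ∀ k : ℕ, 1 ≤ k → k ≤ m →
      fk k = (1 / τ) • ∫ s in (((k - 1 : ℕ) : ℝ) * τ)..((k : ℝ) * τ), f s)
    {i : ℕ} (hi : i ≤ m) :
    fk i = (1 / τ) • ∫ s in i * τ - τ..i * τ, (f 0 + ∫ r in 0..s, (Ioc 0 T).indicator g r) := by
  rcases i with _ | j
  · rw [Nat.cast_zero, zero_mul, zero_sub, hfk0]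
    have hconst : EqOn (fun s => f 0 + ∫ r in 0..s, (Ioc 0 T).indicator g r) (fun _ => f 0)
        (uIcc (-τ) 0) := fun s hs => by
      rw [uIcc_of_le (by linarith)] at hs
      simp only [intervalIntegral_indicator_Ioc_of_nonpos hs.2, add_zero]
    rw [intervalIntegral.integral_congr hconst, intervalIntegral.integral_const, smul_smul,
      sub_neg_eq_add, zero_add, one_div, inv_mul_cancel₀ hτ.ne', one_smul]
  · have hj : ((j + 1 : ℕ) : ℝ) * τ - τ = j * τ := by push_cast; ring
    have hjT : ((j + 1 : ℕ) : ℝ) * τ ≤ T :=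
      hmτ ▸ mul_le_mul_of_nonneg_right (Nat.cast_le.2 hi) hτ.le
    rw [hfk (j + 1) (Nat.le_add_left 1 j) hi, Nat.add_sub_cancel, hj]
    congr 1
    refine intervalIntegral.integral_congr fun s hs => ?_
    rw [uIcc_of_le (by rw [← hj]; linarith)] at hs
    have hsT : s ∈ Icc 0 T := ⟨le_trans (by positivity) hs.1, hs.2.trans hjT⟩
    rw [hf s hsT, intervalIntegral_indicator_Ioc_of_mem_Icc hsT]

end

/-- If `f ∈ W^{1,2}(0,T;E)` with weak derivative `g`, i.e. `f(t) = f(0) + ∫_0^t g(s) ds`,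
and `f_0 = f(0)`, `f_k = (1/τ) ∫_{t_{k-1}}^{t_k} f(s) ds` for `k = 1,…,m` with `τ = T/m`,
`t_k = kτ`, then `τ · Σ_{k=1}^m ‖(f_k − f_{k−1})/τ‖² ≤ 4 ∫_0^T ‖g(s)‖² ds`. -/
theorem discrete_difference_quotient_bound
    {E : Type*} [NormedAddCommGroup E] [NormedSpace ℝ E] [CompleteSpace E]
    (T : ℝ) (hT : 0 < T) (m : ℕ) (hm : 1 ≤ m) (τ : ℝ) (hτ : τ = T / m)
    (g : ℝ → E) (f : ℝ → E) (fk : ℕ → E)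
    (hg_meas : AEStronglyMeasurable g (volume.restrict (Set.Ioc (0:ℝ) T)))
    (hg_sq : IntegrableOn (fun s => ‖g s‖ ^ 2) (Set.Ioc (0:ℝ) T))
    (hf : ∀ t ∈ Set.Icc (0:ℝ) T, f t = f 0 + ∫ s in (0:ℝ)..t, g s)
    (hfk0 : fk 0 = f 0)
    (hfk : ∀ k : ℕ, 1 ≤ k → k ≤ m →
      fk k = (1 / τ) • ∫ s in (((k - 1 : ℕ) : ℝ) * τ)..((k : ℝ) * τ), f s) :
    τ * ∑ k ∈ Finset.Icc 1 m, ‖(1 / τ) • (fk k - fk (k - 1))‖ ^ 2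
      ≤ 4 * ∫ s in (0:ℝ)..T, ‖g s‖ ^ 2 := by
  have hτ0 : 0 < τ := hτ ▸ div_pos hT (Nat.cast_pos.2 hm)
  have hmτ : m * τ = T := by rw [hτ]; field_simp
  set G := (Ioc 0 T).indicator g
  have hG : Integrable G := (integrable_indicator_iff measurableSet_Ioc).2
    (integrableOn_of_integrableOn_sq_norm measure_Ioc_lt_top.ne hg_meas hg_sq)
  have hG2 : Integrable fun s => ‖G s‖ ^ 2 :=
    sq_norm_indicator _ g ▸ (integrable_indicator_iff measurableSet_Ioc).2 hg_sq
  have hFG : ∀ s t, (f 0 + ∫ r in 0..t, G r) - (f 0 + ∫ r in 0..s, G r) = ∫ r in s..t, G r :=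
    fun s t => by
      rw [add_sub_add_left_eq_sub, intervalIntegral.integral_interval_sub_left
        hG.intervalIntegrable hG.intervalIntegrable]
  rw [← Finset.Ico_add_one_right_eq_Icc, Finset.sum_Ico_eq_sum_range, Finset.mul_sum,
    add_tsub_cancel_right]
  calc ∑ i ∈ Finset.range m, τ * ‖(1 / τ) • (fk (1 + i) - fk (1 + i - 1))‖ ^ 2
      ≤ ∑ i ∈ Finset.range m, 2 * ∫ s in i * τ - τ..i * τ + τ, ‖G s‖ ^ 2 := by
        refine Finset.sum_le_sum fun i hi => ?_
        have him : i < m := Finset.mem_range.1 hi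
        rw [add_tsub_cancel_left, add_comm,
          eq_smul_intervalIntegral_extension (i := i + 1) hτ0 hmτ hf hfk0 hfk him,
          eq_smul_intervalIntegral_extension hτ0 hmτ hf hfk0 hfk him.le,
          show ((i + 1 : ℕ) : ℝ) * τ - τ = i * τ by push_cast; ring,
          show ((i + 1 : ℕ) : ℝ) * τ = i * τ + τ by push_cast; ring]
        exact mul_norm_sq_difference_quotient_le hG hG2 hFG (i * τ) hτ0
    _ ≤ 2 * (2 * ∫ s, ‖G s‖ ^ 2) := by
        rw [← Finset.mul_sum]
        gcongr
        exact sum_intervalIntegral_sub_add_le (fun _ => sq_nonneg _) hG2 τ m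
    _ = 4 * ∫ s in (0:ℝ)..T, ‖g s‖ ^ 2 := by
        rw [sq_norm_indicator, integral_indicator measurableSet_Ioc,
          intervalIntegral.integral_of_le hT.le]
        ring
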